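/- If T and U are topologies of which one is compactly generated (Hausdorff with T = kT) and the other is locally compact, then the Kelleyfication of the product topology T × U equals the product topology T × U itself; that is, the product topology is almost compactly generated. -/

import Mathlib

open Set Filter Topology

/-- The Kelleyfication of a topology `T`: a set is open iff its trace on every `T`-compact
set agrees with the trace of some `T`-open set. -/
def Kelley {X : Type*} (T : TopologicalSpace X) : TopologicalSpace X where
  IsOpen U := ∀ K : Set X, @IsCompact X T K → ∃ V : Set X, T.IsOpen V ∧ U ∩ K = V ∩ K
  isOpen_univ K _ := ⟨univ, T.isOpen_univ, rfl⟩
  isOpen_inter := by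
    intro s t hs ht K hK
    obtain ⟨Vs, hVs, hsK⟩ := hs K hK
    obtain ⟨Vt, hVt, htK⟩ := ht K hK
    refine ⟨Vs ∩ Vt, T.isOpen_inter _ _ hVs hVt, ?_⟩
    ext x
    have h1 := Set.ext_iff.mp hsK x
    have h2 := Set.ext_iff.mp htK x
    simp only [Set.mem_inter_iff] at *
    tauto
  isOpen_sUnion := by
    intro S hS K hK
    choose! V hV1 hV2 using fun t (ht : t ∈ S) => hS t ht K hK
    refine ⟨⋃ t ∈ S, V t, ?_, ?_⟩
    · letI := T
      exact isOpen_biUnion fun t ht => hV1 t ht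
    · ext x
      simp only [Set.mem_inter_iff, Set.mem_sUnion, Set.mem_iUnion, exists_prop]
      constructor
      · rintro ⟨⟨t, htS, hxt⟩, hxK⟩
        have h := Set.ext_iff.mp (hV2 t htS) x
        simp only [Set.mem_inter_iff] at h
        exact ⟨⟨t, htS, (h.mp ⟨hxt, hxK⟩).1⟩, hxK⟩
      · rintro ⟨⟨t, htS, hxt⟩, hxK⟩
        have h := Set.ext_iff.mp (hV2 t htS) x
        simp only [Set.mem_inter_iff] at h
        exact ⟨⟨t, htS, (h.mpr ⟨hxt, hxK⟩).1⟩, hxK⟩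

/-- The k-extension of a topology `T`: like the Kelleyfication, but quantifying only over
`T`-closed `T`-compact sets. -/
def KelleyEx {X : Type*} (T : TopologicalSpace X) : TopologicalSpace X where
  IsOpen U := ∀ K : Set X, @IsCompact X T K → @IsClosed X T K →
    ∃ V : Set X, T.IsOpen V ∧ U ∩ K = V ∩ K
  isOpen_univ K _ _ := ⟨univ, T.isOpen_univ, rfl⟩
  isOpen_inter := by
    intro s t hs ht K hK hKc
    obtain ⟨Vs, hVs, hsK⟩ := hs K hK hKc
    obtain ⟨Vt, hVt, htK⟩ := ht K hK hKc
    refine ⟨Vs ∩ Vt, T.isOpen_inter _ _ hVs hVt, ?_⟩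
    ext x
    have h1 := Set.ext_iff.mp hsK x
    have h2 := Set.ext_iff.mp htK x
    simp only [Set.mem_inter_iff] at *
    tauto
  isOpen_sUnion := by
    intro S hS K hK hKc
    choose! V hV1 hV2 using fun t (ht : t ∈ S) => hS t ht K hK hKc
    refine ⟨⋃ t ∈ S, V t, ?_, ?_⟩
    · letI := T
      exact isOpen_biUnion fun t ht => hV1 t ht
    · ext x
      simp only [Set.mem_inter_iff, Set.mem_sUnion, Set.mem_iUnion, exists_prop]
      constructor
      · rintro ⟨⟨t, htS, hxt⟩, hxK⟩
        have h := Set.ext_iff.mp (hV2 t htS) x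
        simp only [Set.mem_inter_iff] at h
        exact ⟨⟨t, htS, (h.mp ⟨hxt, hxK⟩).1⟩, hxK⟩
      · rintro ⟨⟨t, htS, hxt⟩, hxK⟩
        have h := Set.ext_iff.mp (hV2 t htS) x
        simp only [Set.mem_inter_iff] at h
        exact ⟨⟨t, htS, (h.mpr ⟨hxt, hxK⟩).1⟩, hxK⟩

/-- A topology is compactly generated iff it is Hausdorff and equals its Kelleyfication. -/
def IsCG {X : Type*} (T : TopologicalSpace X) : Prop :=
  @T2Space X T ∧ Kelley T = T

/-- Local compactness in the sense of the paper: every point of an open set `V` has an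
open neighbourhood contained in a compact subset of `V`. -/
def LocCompact {Y : Type*} (t : TopologicalSpace Y) : Prop :=
  ∀ y : Y, ∀ V : Set Y, t.IsOpen V → y ∈ V →
    ∃ K U : Set Y, y ∈ U ∧ t.IsOpen U ∧ U ⊆ K ∧ K ⊆ V ∧ @IsCompact Y t K

/-- A real compactly generated vector space: a compactly generated topology for which the
algebraic operations are continuous from the Kelleyfications of the product topologies. -/
def IsCGVS {X : Type*} [AddCommGroup X] [Module ℝ X] (T : TopologicalSpace X) : Prop :=
  IsCG T ∧
  Continuous[Kelley (@instTopologicalSpaceProd X X T T), T] (fun p : X × X => p.1 + p.2) ∧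
  Continuous[Kelley (@instTopologicalSpaceProd ℝ X inferInstance T), T]
    (fun p : ℝ × X => p.1 • p.2)

/-- Sequential completeness of a topologized additive group: every Cauchy sequence converges. -/
def SeqComplete {X : Type*} [AddCommGroup X] (U : TopologicalSpace X) : Prop :=
  ∀ u : ℕ → X, (∀ V ∈ @nhds X U 0, ∃ N : ℕ, ∀ m ≥ N, ∀ n ≥ N, u m - u n ∈ V) →
    ∃ x : X, Filter.Tendsto u Filter.atTop (@nhds X U x)

/-- Seip-convenient space: a compactly generated real vector space whose topology is the
Kelleyfication of a sequentially complete Hausdorff locally convex vector topology. -/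
def IsSeipConvenient {X : Type*} [AddCommGroup X] [Module ℝ X] (T : TopologicalSpace X) : Prop :=
  IsCGVS T ∧ ∃ U : TopologicalSpace X,
    @IsTopologicalAddGroup X U _ ∧ @ContinuousSMul ℝ X _ _ U ∧
    @LocallyConvexSpace ℝ X _ _ _ _ U ∧ @T2Space X U ∧ SeqComplete U ∧ T = Kelley U

/-- The compact-open topology on the full function space, generated by the usual subbasis. -/
def coTop {X Y : Type*} (tX : TopologicalSpace X) (tY : TopologicalSpace Y) :
    TopologicalSpace (X → Y) :=
  TopologicalSpace.generateFrom
    {S | ∃ (K : Set X) (V : Set Y), @IsCompact X tX K ∧ tY.IsOpen V ∧ S = {f | f '' K ⊆ V}}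

/-- `γ` is Riemann integrable to `x` on `[a,b]` with respect to the topology `T`. -/
def RiemannIntegrableTo {E : Type*} [AddCommGroup E] [Module ℝ E]
    (T : TopologicalSpace E) (a b : ℝ) (γ : ℝ → E) (x : E) : Prop :=
  ∀ V ∈ @nhds E T x, ∃ δ : ℝ, 0 < δ ∧ ∀ (k : ℕ) (t s : ℕ → ℝ),
    t 0 = a → t k = b → (∀ i < k, t i ≤ t (i + 1)) →
    (∀ i < k, t (i + 1) - t i < δ) →
    (∀ i < k, t i ≤ s i ∧ s i ≤ t (i + 1)) →
    (∑ i ∈ Finset.range k, (t (i + 1) - t i) • γ (s i)) ∈ V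

/-- `c` is differentiable to `x` at `t₀` (within `J`) with respect to the topology `T`. -/
def DiffTo {E : Type*} [AddCommGroup E] [Module ℝ E] (T : TopologicalSpace E)
    (J : Set ℝ) (c : ℝ → E) (t₀ : ℝ) (x : E) : Prop :=
  ∀ V ∈ @nhds E T x, ∃ δ : ℝ, 0 < δ ∧ ∀ t : ℝ, t₀ + t ∈ J → 0 < |t| → |t| < δ →
    t⁻¹ • (c (t₀ + t) - c t₀) ∈ V

/-! A `Kelley`-open set `W ⊆ X × Y` meets each vertical fibre in a `Kelley`-open, hence open,
set of the locally compact factor `Y`; so every point `(x₀, y₀) ∈ W` has a compact neighbourhood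
`L` of `y₀` with `{x₀} ×ˢ L ⊆ W`. The tube `{x | {x} ×ˢ L ⊆ W}` is then `Kelley`-open in `X`,
because on a compact `K` it agrees with the tube of an open set that traces `W` on `K ×ˢ L`, and
tubes of open sets over a compact set are open. As `X` is its own Kelleyfication, the tube is open
and the tube times `L` is a neighbourhood of `(x₀, y₀)` inside `W`. -/

section Kelley

variable {X Y : Type*}

lemma kelley_le (t : TopologicalSpace X) : Kelley t ≤ t :=
  fun W hW _ _ ↦ ⟨W, hW, rfl⟩

lemma isOpen_kelley_iff {t : TopologicalSpace X} {W : Set X} :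
    IsOpen[Kelley t] W ↔ ∀ K, @IsCompact X t K → ∃ V, IsOpen[t] V ∧ W ∩ K = V ∩ K :=
  Iff.rfl

lemma Continuous.kelley {tX : TopologicalSpace X} {tY : TopologicalSpace Y} {f : X → Y}
    (hf : Continuous[tX, tY] f) : Continuous[Kelley tX, Kelley tY] f := by
  refine continuous_def.2 fun W hW K hK ↦ ?_
  obtain ⟨V, hV, hVW⟩ := isOpen_kelley_iff.1 hW (f '' K) (hK.image hf)
  refine ⟨f ⁻¹' V, hV.preimage hf, ?_⟩
  have hK : f ⁻¹' (f '' K) ∩ K = K := inter_eq_right.2 (subset_preimage_image f K)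
  rw [← hK, ← inter_assoc, ← inter_assoc, ← preimage_inter, ← preimage_inter, hVW]

lemma Homeomorph.kelley_eq_self [tX : TopologicalSpace X] [tY : TopologicalSpace Y]
    (e : X ≃ₜ Y) (h : Kelley tX = tX) : Kelley tY = tY := by
  refine le_antisymm (kelley_le _) (continuous_id_iff_le.1 ?_)
  have he : Continuous[Kelley tX, Kelley tY] e := e.continuous.kelley
  rw [h] at he
  simpa only [e.self_comp_symm] using @Continuous.comp Y X Y tY tX (Kelley tY) e.symm e he
    e.symm.continuous

lemma kelley_eq_self_of_weaklyLocallyCompactSpace [tX : TopologicalSpace X]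
    [WeaklyLocallyCompactSpace X] : Kelley tX = tX := by
  refine le_antisymm (kelley_le _) fun W hW ↦ isOpen_iff_mem_nhds.2 fun x hx ↦ ?_
  obtain ⟨K, hK, hKx⟩ := exists_compact_mem_nhds x
  obtain ⟨V, hV, hVW⟩ := isOpen_kelley_iff.1 hW K hK
  have hxV : x ∈ V := (hVW ▸ ⟨hx, mem_of_mem_nhds hKx⟩ : x ∈ V ∩ K).1
  filter_upwards [hKx, hV.mem_nhds hxV] with y hyK hyV
  exact (hVW.symm ▸ ⟨hyV, hyK⟩ : y ∈ W ∩ K).1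

lemma IsCompact.isOpen_setOf_forall_prodMk_mem [TopologicalSpace X] [TopologicalSpace Y]
    {L : Set Y} (hL : IsCompact L) {V : Set (X × Y)} (hV : IsOpen V) :
    IsOpen {x | ∀ y ∈ L, (x, y) ∈ V} :=
  isOpen_iff_eventually.2 fun _ hx ↦
    hL.eventually_forall_of_forall_eventually fun y hy ↦ hV.mem_nhds (hx y hy)

lemma IsCompact.isOpen_kelley_setOf_forall_prodMk_mem [TopologicalSpace X] [TopologicalSpace Y]
    {L : Set Y} (hL : IsCompact L) {W : Set (X × Y)} (hW : IsOpen[Kelley inferInstance] W) :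
    IsOpen[Kelley inferInstance] {x | ∀ y ∈ L, (x, y) ∈ W} := by
  refine isOpen_kelley_iff.2 fun K hK ↦ ?_
  obtain ⟨V, hV, hVW⟩ := isOpen_kelley_iff.1 hW (K ×ˢ L) (hK.prod hL)
  refine ⟨_, hL.isOpen_setOf_forall_prodMk_mem hV, ?_⟩
  ext x
  simp only [Set.ext_iff, mem_inter_iff, mem_prod, Prod.forall] at hVW
  simp only [mem_inter_iff, mem_ofPred_eq]
  exact and_congr_left fun hx ↦ forall₂_congr fun y hy ↦ by simpa [hx, hy] using hVW x y

lemma kelley_prod_eq_self [tX : TopologicalSpace X] [tY : TopologicalSpace Y]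
    [LocallyCompactSpace Y] (hX : Kelley tX = tX) :
    Kelley (instTopologicalSpaceProd : TopologicalSpace (X × Y)) = instTopologicalSpaceProd := by
  refine le_antisymm (kelley_le _) fun W hW ↦ isOpen_iff_mem_nhds.2 ?_
  rintro ⟨x₀, y₀⟩ hxy
  have hfibre : IsOpen {y | (x₀, y) ∈ W} := by
    have h : Continuous[Kelley tY, Kelley instTopologicalSpaceProd] (fun y : Y ↦ (x₀, y)) :=
      (Continuous.prodMk_right x₀).kelley
    rw [kelley_eq_self_of_weaklyLocallyCompactSpace] at h
    exact @Continuous.isOpen_preimage _ _ tY (Kelley instTopologicalSpaceProd) _ h W hW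
  obtain ⟨L, hLy, hLW, hL⟩ := local_compact_nhds (hfibre.mem_nhds hxy)
  have htube : IsOpen {x | ∀ y ∈ L, (x, y) ∈ W} :=
    hX ▸ hL.isOpen_kelley_setOf_forall_prodMk_mem hW
  filter_upwards [prod_mem_nhds (htube.mem_nhds fun y hy ↦ hLW hy) hLy]
  exact fun p hp ↦ hp.1 p.2 hp.2

lemma LocCompact.locallyCompactSpace {t : TopologicalSpace X} (h : LocCompact t) :
    @LocallyCompactSpace X t := by
  refine ⟨fun x n hn ↦ ?_⟩
  obtain ⟨V, hVn, hV, hxV⟩ := mem_nhds_iff.1 hn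
  obtain ⟨K, U, hxU, hU, hUK, hKV, hK⟩ := h x V hV hxV
  exact ⟨K, mem_of_superset ((show IsOpen[t] U from hU).mem_nhds hxU) hUK, hKV.trans hVn, hK⟩

end Kelley

/-- If one of the topologies `T`, `U` is compactly generated and the other is
locally compact, then their product topology equals its own Kelleyfication, i.e. it is
almost compactly generated. -/
theorem kelley_prod_of_cg_locCompact {X Y : Type*} (T : TopologicalSpace X)
    (U : TopologicalSpace Y)
    (h : (IsCG T ∧ LocCompact U) ∨ (LocCompact T ∧ IsCG U)) :
    Kelley (@instTopologicalSpaceProd X Y T U) = @instTopologicalSpaceProd X Y T U := by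
  rcases h with ⟨⟨-, hT⟩, hU⟩ | ⟨hT, -, hU⟩
  · exact @kelley_prod_eq_self X Y T U hU.locallyCompactSpace hT
  · exact @Homeomorph.kelley_eq_self _ _ _ _ (@Homeomorph.prodComm Y X U T)
      (@kelley_prod_eq_self Y X U T hT.locallyCompactSpace hU)
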